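/- arXiv:0908.1752 — 2 statements merged into one kernel-verified Lean document; each statement's English description precedes it below -/
import Mathlib

section
/- Let p be an odd prime and n ≥ 1. If H is a closed subgroup of SL_n(ℤ_p) (the special linear group over the ring of p-adic integers, with its natural topology as a subspace of n×n matrices over ℤ_p) whose image under the reduction homomorphism SL_n(ℤ_p) → SL_n(ℤ/p²ℤ) is all of SL_n(ℤ/p²ℤ), then H = SL_n(ℤ_p). -/
/-- The topology on the special linear group induced (as a subspace) from the
space of `n × n` matrices (with the product topology). -/
instance SLTopology {n : Type*} [Fintype n] [DecidableEq n] {R : Type*} [CommRing R]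
    [TopologicalSpace R] : TopologicalSpace (Matrix.SpecialLinearGroup n R) :=
  inferInstanceAs (TopologicalSpace { A : Matrix n n R // A.det = 1 })

/-!
Say that `S ⊆ SL_n(R)` is dense modulo `a` if every element of `SL_n(R)` is congruent modulo `a`
to an element of `S`. As `H` is closed it suffices to show that `H` is dense modulo every `p^k`,
and we induct on `k ≥ 2`. Given `g`, pick `h ∈ H` with `h⁻¹ g = 1 + p^(j+1) A`. Comparing
`det (1 + p^(j+1) A) = 1` with the expansion `det (1 + t A) = 1 + t tr A + O(t²)` gives
`det (1 + p^j A) ≡ 1 mod p^(j+1)`, so `1 + p^j A` lifts to some `w ∈ SL_n`, which by induction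
is approximated by some `h₁ ∈ H`. For odd `p` and `j ≥ 1` the binomial theorem gives
`(1 + p^j B)^p ≡ 1 + p^(j+1) B mod p^(2j+1)`, hence `h₁^p ≡ h⁻¹ g mod p^(j+2)`, and
`h h₁^p ∈ H` approximates `g` modulo `p^(j+2)`.
-/

open Polynomial Finset Filter Topology IsLocalRing

theorem Nat.Prime.pow_dvd_pow_mul_choose {p j m : ℕ} (hp : p.Prime) (hodd : Odd p) (hj : 1 ≤ j)
    (hm : 2 ≤ m) (hmp : m ≤ p) : p ^ (2 * j + 1) ∣ p ^ (j * m) * p.choose m := by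
  rcases hmp.lt_or_eq with hmp | rfl
  · rw [pow_succ]
    exact mul_dvd_mul (Nat.pow_dvd_pow _ (by nlinarith)) (hp.dvd_choose_self (by omega) hmp)
  · have hm3 : 3 ≤ m := by obtain ⟨k, rfl⟩ := hodd; omega
    exact (Nat.pow_dvd_pow _ (by nlinarith)).mul_right _

theorem Nat.Prime.pow_dvd_one_add_mul_pow_sub {R : Type*} [CommRing R] {p j : ℕ} (hp : p.Prime)
    (hodd : Odd p) (hj : 1 ≤ j) (x : R) :
    (p : R) ^ (2 * j + 1) ∣ (1 + (p : R) ^ j * x) ^ p - (1 + (p : R) ^ (j + 1) * x) := by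
  have hsplit : p + 1 = p - 1 + 1 + 1 := by have := hp.one_lt; omega
  have hexpand : (1 + (p : R) ^ j * x) ^ p = 1 + (p : R) ^ (j + 1) * x +
      ∑ m ∈ range (p - 1),
        ((p ^ (j * (m + 2)) * p.choose (m + 2) : ℕ) : R) * x ^ (m + 2) := by
    rw [add_comm, add_pow, hsplit, sum_range_succ', sum_range_succ']
    simp only [one_pow, mul_one, Nat.cast_mul, Nat.cast_pow, pow_zero, Nat.choose_zero_right,
      Nat.cast_one, zero_add, Nat.choose_one_right, mul_pow, pow_mul, pow_succ]
    ring_nf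
  rw [hexpand, add_sub_cancel_left]
  refine dvd_sum fun m hm => Dvd.dvd.mul_right ?_ _
  rw [← Nat.cast_pow]
  exact Nat.cast_dvd_cast (hp.pow_dvd_pow_mul_choose hodd hj (by omega) (by simp at hm; omega))

section MatrixModEq

variable {R : Type*} [CommRing R] {l m n : Type*}

def MatrixModEq (a : R) (X Y : Matrix m n R) : Prop :=
  ∃ B, X - Y = a • B

namespace MatrixModEq

variable {a b : R} {X Y Z : Matrix m n R}

protected theorem refl (X : Matrix m n R) : MatrixModEq a X X :=
  ⟨0, by simp⟩

protected theorem symm (h : MatrixModEq a X Y) : MatrixModEq a Y X := by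
  obtain ⟨B, hB⟩ := h
  exact ⟨-B, by rw [← neg_sub, hB, smul_neg]⟩

protected theorem trans (h₁ : MatrixModEq a X Y) (h₂ : MatrixModEq a Y Z) :
    MatrixModEq a X Z := by
  obtain ⟨B, hB⟩ := h₁
  obtain ⟨C, hC⟩ := h₂
  exact ⟨B + C, by rw [← sub_add_sub_cancel X Y Z, hB, hC, smul_add]⟩

theorem of_dvd (hab : b ∣ a) (h : MatrixModEq a X Y) : MatrixModEq b X Y := by
  obtain ⟨c, rfl⟩ := hab
  obtain ⟨B, hB⟩ := h
  exact ⟨c • B, by rw [hB, smul_smul]⟩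

theorem mul [Fintype n] {X X' : Matrix l n R} {Y Y' : Matrix n m R}
    (hX : MatrixModEq a X X') (hY : MatrixModEq a Y Y') :
    MatrixModEq a (X * Y) (X' * Y') := by
  obtain ⟨B, hB⟩ := hX
  obtain ⟨C, hC⟩ := hY
  refine ⟨B * Y + X' * C, ?_⟩
  rw [smul_add, ← Matrix.smul_mul, ← Matrix.mul_smul, ← hB, ← hC, Matrix.sub_mul,
    Matrix.mul_sub]
  abel

theorem iff_dvd : MatrixModEq a X Y ↔ ∀ i j, a ∣ X i j - Y i j := by
  refine ⟨fun ⟨B, hB⟩ i j => ⟨B i j, ?_⟩, fun h => ⟨fun i j => (h i j).choose, ?_⟩⟩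
  · rw [← Matrix.sub_apply, hB, Matrix.smul_apply, smul_eq_mul]
  · ext i j
    exact (h i j).choose_spec

theorem iff_map_eq {S : Type*} [Ring S] {f : R →+* S} (hf : RingHom.ker f = Ideal.span {a}) :
    MatrixModEq a X Y ↔ X.map f = Y.map f := by
  simp only [iff_dvd, ← Ideal.mem_span_singleton, ← hf, RingHom.mem_ker, map_sub, sub_eq_zero,
    ← Matrix.ext_iff, Matrix.map_apply]

variable [Fintype n] [DecidableEq n] {p j : ℕ}

theorem one_add_smul_pow (hp : p.Prime) (hodd : Odd p) (hj : 1 ≤ j) (A : Matrix n n R) :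
    MatrixModEq ((p : R) ^ (2 * j + 1)) ((1 + (p : R) ^ j • A) ^ p)
      (1 + (p : R) ^ (j + 1) • A) := by
  obtain ⟨q, hq⟩ := hp.pow_dvd_one_add_mul_pow_sub hodd hj (X : R[X])
  refine ⟨aeval A q, ?_⟩
  have h := congrArg (aeval A) hq
  simp only [map_sub, map_add, map_mul, map_pow, map_one, map_natCast, aeval_X] at h
  simpa only [← Nat.cast_pow, Nat.cast_smul_eq_nsmul, nsmul_eq_mul] using h

theorem pow_of_modEq_one_add_smul (hp : p.Prime) (hodd : Odd p) (hj : 1 ≤ j)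
    {X A : Matrix n n R} (h : MatrixModEq ((p : R) ^ (j + 1)) X (1 + (p : R) ^ j • A)) :
    MatrixModEq ((p : R) ^ (j + 2)) (X ^ p) (1 + (p : R) ^ (j + 1) • A) := by
  obtain ⟨C, hC⟩ := h
  have hX : X = 1 + (p : R) ^ j • (A + (p : R) • C) := by
    rw [smul_add, smul_smul, ← pow_succ, ← hC]
    abel
  rw [hX]
  refine ((one_add_smul_pow hp hodd hj _).of_dvd
    (pow_dvd_pow _ (by omega : j + 2 ≤ 2 * j + 1))).trans ?_
  exact ⟨C, by rw [smul_add, smul_smul, ← pow_succ]; abel⟩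

end MatrixModEq

end MatrixModEq

theorem PadicInt.tendsto_of_pow_dvd_sub {p : ℕ} [Fact p.Prime] {x : ℕ → ℤ_[p]} {y : ℤ_[p]}
    (h : ∀ k, (p : ℤ_[p]) ^ k ∣ x k - y) : Tendsto x atTop (𝓝 y) := by
  rw [tendsto_iff_norm_sub_tendsto_zero]
  have hp : (1 : ℝ) < p := mod_cast (Fact.out : p.Prime).one_lt
  refine squeeze_zero (fun _ => norm_nonneg _) (fun k => ?_)
    (tendsto_pow_atTop_nhds_zero_of_lt_one (by positivity) (inv_lt_one_of_one_lt₀ hp))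
  rw [inv_pow, ← zpow_natCast, ← zpow_neg]
  exact (PadicInt.norm_le_pow_iff_mem_span_pow _ k).mpr (Ideal.mem_span_singleton.mpr (h k))

namespace Matrix

variable {R : Type*} [CommRing R] {n : Type*} [Fintype n] [DecidableEq n]

theorem pow_succ_dvd_det_one_add_smul_sub_one [IsDomain R] {a : R} {j : ℕ} (hj : 1 ≤ j)
    {A : Matrix n n R} (hA : det (1 + a ^ (j + 1) • A) = 1) :
    a ^ (j + 1) ∣ det (1 + a ^ j • A) - 1 := by
  rcases eq_or_ne a 0 with rfl | ha
  · simp [zero_pow (by omega : j ≠ 0)]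
  rw [det_one_add_smul] at hA ⊢
  generalize (det (1 + (X : R[X]) • A.map C)).divX.divX = P at hA ⊢
  have htrace : trace A = -(P.eval (a ^ (j + 1)) * a ^ (j + 1)) :=
    mul_right_cancel₀ (pow_ne_zero (j + 1) ha) (by linear_combination hA)
  obtain ⟨i, rfl⟩ : ∃ i, j = i + 1 := ⟨j - 1, by omega⟩
  exact ⟨-(P.eval (a ^ (i + 2)) * a ^ (i + 1)) + P.eval (a ^ (i + 1)) * a ^ i, by
    rw [htrace]; ring⟩

namespace SpecialLinearGroup

theorem exists_modEq_of_dvd_det_sub_one [Nonempty n] [IsLocalRing R] {a : R}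
    (ha : a ∈ maximalIdeal R) {M : Matrix n n R} (hM : a ∣ det M - 1) :
    ∃ w : SpecialLinearGroup n R, MatrixModEq a (w : Matrix n n R) M := by
  obtain ⟨u, hu⟩ : IsUnit (det M) := isUnit_of_mem_nonunits_one_sub_self _ <| by
    rw [← mem_maximalIdeal, ← neg_sub]
    exact (maximalIdeal R).neg_mem (Ideal.mem_of_dvd _ hM ha)
  obtain ⟨c, hc⟩ := hM
  let i₀ : n := Classical.arbitrary n
  have hdet : det (M.updateRow i₀ ((↑u⁻¹ : R) • M i₀)) = 1 := by
    rw [det_updateRow_smul, updateRow_eq_self, ← hu, Units.inv_mul]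
  refine ⟨⟨_, hdet⟩, MatrixModEq.iff_dvd.mpr fun i j => ?_⟩
  rw [coe_mk, updateRow_apply]
  split_ifs with hi
  · subst hi
    refine ⟨-(↑u⁻¹ * c * M i₀ j), ?_⟩
    simp only [Pi.smul_apply, smul_eq_mul]
    linear_combination
      (-(↑u⁻¹ * M i₀ j)) * hc - (↑u⁻¹ * M i₀ j) * hu + M i₀ j * u.inv_mul
  · simp

def IsDenseMod (a : R) (S : Set (SpecialLinearGroup n R)) : Prop :=
  ∀ g : SpecialLinearGroup n R, ∃ h ∈ S, MatrixModEq a (h : Matrix n n R) g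

theorem IsDenseMod.of_dvd {a b : R} {S : Set (SpecialLinearGroup n R)} (hab : b ∣ a)
    (hS : IsDenseMod a S) : IsDenseMod b S := fun g => by
  obtain ⟨h, hS, hg⟩ := hS g
  exact ⟨h, hS, hg.of_dvd hab⟩

theorem isDenseMod_of_map_eq_top {S : Type*} [CommRing S] {a : R} {f : R →+* S}
    (hf : RingHom.ker f = Ideal.span {a}) {H : Subgroup (SpecialLinearGroup n R)}
    (hH : H.map (map f) = ⊤) : IsDenseMod a (H : Set (SpecialLinearGroup n R)) := fun g => by
  obtain ⟨h, hH, hg⟩ := hH.ge (Subgroup.mem_top (map f g))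
  exact ⟨h, hH, (MatrixModEq.iff_map_eq hf).mpr (congrArg Subtype.val hg)⟩

theorem IsDenseMod.pow_add_two [IsDomain R] [IsLocalRing R] [Nonempty n] {p j : ℕ}
    (hp : p.Prime) (hodd : Odd p) (hpR : (p : R) ∈ maximalIdeal R) (hj : 1 ≤ j)
    {H : Subgroup (SpecialLinearGroup n R)}
    (hH : IsDenseMod ((p : R) ^ (j + 1)) (H : Set (SpecialLinearGroup n R))) :
    IsDenseMod ((p : R) ^ (j + 2)) (H : Set (SpecialLinearGroup n R)) := by
  intro g
  obtain ⟨h, hhH, hhg⟩ := hH g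
  obtain ⟨A, hA⟩ :
      MatrixModEq ((p : R) ^ (j + 1)) ((h⁻¹ * g : SpecialLinearGroup n R) : Matrix n n R) 1 := by
    simpa only [← coe_mul, inv_mul_cancel, coe_one] using
      (MatrixModEq.refl ((h⁻¹ : SpecialLinearGroup n R) : Matrix n n R)).mul hhg.symm
  have hu : ((h⁻¹ * g : SpecialLinearGroup n R) : Matrix n n R) = 1 + (p : R) ^ (j + 1) • A :=
    eq_add_of_sub_eq' hA
  obtain ⟨w, hw⟩ := exists_modEq_of_dvd_det_sub_one (Ideal.pow_mem_of_mem _ hpR _ (by omega))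
    (pow_succ_dvd_det_one_add_smul_sub_one hj (hu ▸ (h⁻¹ * g).prop))
  obtain ⟨h₁, hh₁H, hh₁w⟩ := hH w
  refine ⟨h * h₁ ^ p, mul_mem hhH (pow_mem hh₁H p), ?_⟩
  have hpow := MatrixModEq.pow_of_modEq_one_add_smul hp hodd hj (hh₁w.trans hw)
  rw [← hu] at hpow
  have hg : (g : Matrix n n R) = h * (h⁻¹ * g : SpecialLinearGroup n R) := by
    rw [← coe_mul, mul_inv_cancel_left]
  rw [hg, coe_mul h, coe_pow]
  exact (MatrixModEq.refl _).mul hpow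

theorem dense_of_forall_isDenseMod {p : ℕ} [Fact p.Prime] {S : Set (SpecialLinearGroup n ℤ_[p])}
    (hS : ∀ k, IsDenseMod ((p : ℤ_[p]) ^ k) S) : Dense S := by
  intro g
  choose x hxS hx using fun k => hS k g
  refine mem_closure_of_tendsto (b := atTop) (tendsto_subtype_rng.mpr ?_) (.of_forall hxS)
  exact tendsto_pi_nhds.mpr fun i => tendsto_pi_nhds.mpr fun j =>
    PadicInt.tendsto_of_pow_dvd_sub fun k => MatrixModEq.iff_dvd.mp (hx k) i j

end SpecialLinearGroup

end Matrix

/-- If `p` is an odd prime and `H` is a closed subgroup of `SL_n(ℤ_p)` whose image in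
`SL_n(ℤ/p²ℤ)` under entrywise reduction is everything, then `H = SL_n(ℤ_p)`. -/
theorem closed_subgroup_SL_padicInt_eq_top_of_map_eq_top
    (p n : ℕ) [Fact p.Prime] (hodd : Odd p) (hn : 1 ≤ n)
    (H : Subgroup (Matrix.SpecialLinearGroup (Fin n) ℤ_[p]))
    (hclosed : IsClosed (H : Set (Matrix.SpecialLinearGroup (Fin n) ℤ_[p])))
    (hsurj : Subgroup.map
      (Matrix.SpecialLinearGroup.map (PadicInt.toZModPow (p := p) 2)) H = ⊤) :
    H = ⊤ := by
  have : Nonempty (Fin n) := ⟨⟨0, hn⟩⟩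
  have hpmax : (p : ℤ_[p]) ∈ maximalIdeal ℤ_[p] :=
    (mem_maximalIdeal _).mpr PadicInt.p_nonunit
  have hdense : ∀ k, Matrix.SpecialLinearGroup.IsDenseMod ((p : ℤ_[p]) ^ (k + 2))
      (H : Set (Matrix.SpecialLinearGroup (Fin n) ℤ_[p])) := by
    intro k
    induction k with
    | zero =>
      exact Matrix.SpecialLinearGroup.isDenseMod_of_map_eq_top (PadicInt.ker_toZModPow 2) hsurj
    | succ k ih => exact ih.pow_add_two Fact.out hodd hpmax (by omega)
  have hH : Dense (H : Set (Matrix.SpecialLinearGroup (Fin n) ℤ_[p])) :=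
    Matrix.SpecialLinearGroup.dense_of_forall_isDenseMod fun k =>
      (hdense k).of_dvd (pow_dvd_pow _ (by omega : k ≤ k + 2))
  rw [← SetLike.coe_set_eq, Subgroup.coe_top, ← hclosed.closure_eq, hH.closure_eq]
end

section
/- Let p ≥ 5 be a prime, let k be a finite field of characteristic p, and let W(k) be the ring of Witt vectors of k. The reduction group homomorphism SL₂(W(k)/p²W(k)) → SL₂(W(k)/pW(k)), induced entrywise by the natural surjective ring homomorphism W(k)/p²W(k) → W(k)/pW(k), is surjective and does not split: there is no group homomorphism s : SL₂(W(k)/pW(k)) → SL₂(W(k)/p²W(k)) whose composite with the reduction map is the identity of SL₂(W(k)/pW(k)). -/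
/-!
The kernel of `W(k)/p² → W(k)/p` squares to zero. Surjectivity: lift a matrix entrywise; its
determinant is `1 + κ` with `κ² = 0`, so scaling one row by `1 - κ` brings it back into `SL`.
No section: the transvection `u = 1 + E₀₁` has order `p` in `SL₂(W(k)/p)`. Any lift `1 + N` of
`u` has `N² ≡ 0 mod p`, hence `p N² = 0` and `N⁴ = 0`; as `p ≥ 5` and `p` divides the inner
binomial coefficients, `(1 + N)ᵖ = 1 + p N`. The `(0, 1)` entry of `p N` is `p` times a lift of
`1`, which is `p ≠ 0`; so no lift of `u` has order `p`.
-/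

open Matrix

theorem one_add_pow_prime_eq {M : Type*} [Ring M] {p : ℕ} (hp : p.Prime) {N : M}
    (hN2 : (p : M) * N ^ 2 = 0) (hNp : N ^ p = 0) : (1 + N) ^ p = 1 + p * N := by
  have hterm : ∀ k ∈ Finset.Ioo 0 p, k ≠ 1 →
      (p : M) * (N ^ k * 1 ^ (p - k) * ((p.choose k / p : ℕ) : M)) = 0 := by
    intro k hk hk1
    obtain ⟨m, rfl⟩ : ∃ m, k = 2 + m := ⟨k - 2, by grind⟩
    simp only [pow_add, ← mul_assoc, hN2, zero_mul]
  rw [add_comm 1 N, (Commute.one_right N).add_pow_prime_eq' hp, Finset.mul_sum,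
    Finset.sum_eq_single_of_mem 1 (by simp [hp.one_lt]) hterm]
  simp [hNp, Nat.div_self hp.pos, add_comm]

theorem RingHom.mul_eq_zero_of_ker_sq_eq_bot {R S : Type*} [CommRing R] [CommRing S]
    {f : R →+* S} (hf : RingHom.ker f ^ 2 = ⊥) {x y : R} (hx : f x = 0) (hy : f y = 0) :
    x * y = 0 := by
  have hxy : x * y ∈ RingHom.ker f ^ 2 := sq (RingHom.ker f) ▸ Ideal.mul_mem_mul hx hy
  simpa [hf] using hxy

namespace Matrix

variable {n R S : Type*} [Fintype n] [DecidableEq n] [CommRing R] [CommRing S] {f : R →+* S}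
  {p : ℕ} {i j : n}

theorem mul_eq_zero_of_ker_sq_eq_bot {l m o : Type*} [Fintype m] (hf : RingHom.ker f ^ 2 = ⊥)
    {X : Matrix l m R} {Y : Matrix m o R} (hX : X.map f = 0) (hY : Y.map f = 0) :
    X * Y = 0 := by
  ext a c
  exact Finset.sum_eq_zero fun b _ ↦
    RingHom.mul_eq_zero_of_ker_sq_eq_bot hf (congrFun₂ hX a b) (congrFun₂ hY b c)

theorem pow_prime_eq_of_map_eq_transvection (hf : RingHom.ker f ^ 2 = ⊥) (hp : p.Prime)
    (hp5 : 5 ≤ p) (hpS : (p : S) = 0) (hij : i ≠ j) {b : S} {B : Matrix n n R}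
    (hB : B.map f = transvection i j b) : B ^ p = 1 + p * (B - 1) := by
  have hN2 : ((B - 1) ^ 2).map f = 0 := by
    rw [← RingHom.mapMatrix_apply, map_pow, map_sub, map_one, RingHom.mapMatrix_apply, hB]
    simp [transvection, sq, hij.symm]
  have hpB : (p : Matrix n n R).map f = 0 := by
    rw [← RingHom.mapMatrix_apply, map_natCast, ← diagonal_natCast, hpS, diagonal_zero]
  have hN4 : (B - 1) ^ 4 = 0 := by
    rw [show 4 = 2 + 2 from rfl, pow_add]
    exact mul_eq_zero_of_ker_sq_eq_bot hf hN2 hN2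
  simpa using one_add_pow_prime_eq hp
    (mul_eq_zero_of_ker_sq_eq_bot hf hpB hN2) (pow_eq_zero_of_le (by omega) hN4)

namespace SpecialLinearGroup

theorem map_surjective_of_ker_sq_eq_bot (hsurj : Function.Surjective f)
    (hf : RingHom.ker f ^ 2 = ⊥) : Function.Surjective (map (n := n) f) := by
  intro A
  cases isEmpty_or_nonempty n
  · exact ⟨1, Subsingleton.elim _ _⟩
  obtain ⟨i⟩ := ‹Nonempty n›
  obtain ⟨B, hB⟩ : ∃ B : Matrix n n R, B.map f = A :=
    ⟨(A : Matrix n n S).map (Function.surjInv hsurj), by simp⟩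
  obtain ⟨κ, hBdet⟩ : ∃ κ, B.det = 1 + κ := ⟨B.det - 1, by ring⟩
  have hκ : f κ = 0 := by
    have h := congrArg f hBdet
    rw [RingHom.map_det, RingHom.mapMatrix_apply, hB, A.2, map_add, map_one] at h
    linear_combination -h
  have hdet : (B.updateRow i ((1 - κ) • B i)).det = 1 := by
    rw [det_updateRow_smul, updateRow_eq_self, hBdet]
    linear_combination -RingHom.mul_eq_zero_of_ker_sq_eq_bot hf hκ hκ
  refine ⟨⟨_, hdet⟩, Subtype.ext ?_⟩
  change (B.updateRow i ((1 - κ) • B i)).map f = A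
  rw [← hB, map_updateRow]
  convert updateRow_eq_self (B.map f) i using 2
  funext j
  simp [hκ]

theorem transvection_pow_prime_eq_one (hp : p.Prime) (hpS : (p : S) = 0) (hij : i ≠ j) (b : S) :
    transvection hij b ^ p = 1 := by
  have he : single i j b ^ 2 = 0 := by simp [sq, hij.symm]
  ext1
  rw [coe_pow, transvection_coe,
    one_add_pow_prime_eq hp (by simp [he]) (pow_eq_zero_of_le hp.two_le he)]
  simp [← diagonal_natCast, hpS]

theorem not_exists_map_comp_eq_id (hf : RingHom.ker f ^ 2 = ⊥) (hp : p.Prime) (hp5 : 5 ≤ p)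
    (hpS : (p : S) = 0) (hpR : (p : R) ≠ 0) (hij : i ≠ j) :
    ¬ ∃ s : SpecialLinearGroup n S →* SpecialLinearGroup n R,
        (map f).comp s = MonoidHom.id _ := by
  rintro ⟨s, hs⟩
  set B : Matrix n n R := ↑(s (transvection hij 1))
  have hB : B.map f = Matrix.transvection i j 1 :=
    congrArg Subtype.val (DFunLike.congr_fun hs (transvection hij 1))
  have hBp : B ^ p = 1 := by
    rw [← coe_pow, ← map_pow, transvection_pow_prime_eq_one hp hpS, map_one, coe_one]
  have hpN : (p : Matrix n n R) * (B - 1) = 0 := by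
    simpa [hBp] using pow_prime_eq_of_map_eq_transvection hf hp hp5 hpS hij hB
  have hBij : f (B i j) = 1 := by
    simpa [Matrix.transvection, hij] using congrFun₂ hB i j
  have h1 : (p : R) * B i j = 0 := by
    simpa [hij, ← diagonal_natCast] using congrFun₂ hpN i j
  have h2 : (p : R) * (B i j - 1) = 0 :=
    RingHom.mul_eq_zero_of_ker_sq_eq_bot hf (by simp [hpS]) (by simp [hBij])
  exact hpR (by linear_combination h1 - h2)

end SpecialLinearGroup

end Matrix

namespace Ideal.Quotient

variable {A : Type*} [CommRing A]

theorem ker_factor_sq_eq_bot {I J : Ideal A} (H : I ≤ J) (hJ : J ^ 2 ≤ I) :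
    RingHom.ker (factor H) ^ 2 = ⊥ := by
  rw [factor_ker, ← Ideal.map_pow, eq_bot_iff, ← map_quotient_self I]
  exact Ideal.map_mono hJ

theorem mk_span_sq_self_ne_zero [IsDomain A] {a : A} (ha : a ≠ 0) (hu : ¬IsUnit a) :
    mk (span {a ^ 2}) a ≠ 0 := by
  rw [Ne, eq_zero_iff_mem, mem_span_singleton]
  simpa using (pow_dvd_pow_iff ha hu (n := 2) (m := 1)).not.mpr (by norm_num)

end Ideal.Quotient

/-- The reduction homomorphism `SL₂(W(k)/p²W(k)) → SL₂(W(k)/pW(k))` induced entrywise by the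
natural surjection `W(k)/p²W(k) → W(k)/pW(k)`. -/
noncomputable def reductionSL2 (p : ℕ) [Fact p.Prime] (k : Type*) [CommRing k] :
    Matrix.SpecialLinearGroup (Fin 2)
        (WittVector p k ⧸ Ideal.span {(p : WittVector p k) ^ 2}) →*
      Matrix.SpecialLinearGroup (Fin 2)
        (WittVector p k ⧸ Ideal.span {(p : WittVector p k)}) :=
  Matrix.SpecialLinearGroup.map
    (Ideal.Quotient.factor (S := Ideal.span {(p : WittVector p k) ^ 2})
      (T := Ideal.span {(p : WittVector p k)})
      (Ideal.span_singleton_le_span_singleton.mpr (dvd_pow_self _ two_ne_zero)))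

theorem reductionSL2_surjective_and_not_splits_general
    (p : ℕ) [Fact p.Prime] (hp5 : 5 ≤ p)
    (k : Type*) [Field k] [CharP k p] :
    Function.Surjective (reductionSL2 p k) ∧
      ¬ ∃ s : Matrix.SpecialLinearGroup (Fin 2)
            (WittVector p k ⧸ Ideal.span {(p : WittVector p k)}) →*
          Matrix.SpecialLinearGroup (Fin 2)
            (WittVector p k ⧸ Ideal.span {(p : WittVector p k) ^ 2}),
        (reductionSL2 p k).comp s = MonoidHom.id _ := by
  have hker := Ideal.Quotient.ker_factor_sq_eq_bot
    (Ideal.span_singleton_le_span_singleton.mpr (dvd_pow_self (p : WittVector p k) two_ne_zero))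
    (Ideal.span_singleton_pow _ 2).le
  have hpS : (p : WittVector p k ⧸ Ideal.span {(p : WittVector p k)}) = 0 := by
    rw [← map_natCast (Ideal.Quotient.mk _), Ideal.Quotient.eq_zero_iff_mem]
    exact Ideal.mem_span_singleton_self _
  have hpR : (p : WittVector p k ⧸ Ideal.span {(p : WittVector p k) ^ 2}) ≠ 0 := by
    rw [← map_natCast (Ideal.Quotient.mk _)]
    exact Ideal.Quotient.mk_span_sq_self_ne_zero (WittVector.irreducible p).ne_zero
      (WittVector.irreducible p).not_isUnit
  exact ⟨Matrix.SpecialLinearGroup.map_surjective_of_ker_sq_eq_bot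
      (Ideal.Quotient.factor_surjective _) hker,
    Matrix.SpecialLinearGroup.not_exists_map_comp_eq_id hker Fact.out hp5 hpS hpR
      (zero_ne_one : (0 : Fin 2) ≠ 1)⟩

/-- For `p ≥ 5` prime and `k` a finite field of characteristic `p`, the reduction map
`SL₂(W(k)/p²) → SL₂(W(k)/p)` is surjective but admits no group-theoretic section. -/
theorem reductionSL2_surjective_and_not_splits
    (p : ℕ) [Fact p.Prime] (hp5 : 5 ≤ p)
    (k : Type*) [Field k] [Finite k] [CharP k p] :
    Function.Surjective (reductionSL2 p k) ∧
      ¬ ∃ s : Matrix.SpecialLinearGroup (Fin 2)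
            (WittVector p k ⧸ Ideal.span {(p : WittVector p k)}) →*
          Matrix.SpecialLinearGroup (Fin 2)
            (WittVector p k ⧸ Ideal.span {(p : WittVector p k) ^ 2}),
        (reductionSL2 p k).comp s = MonoidHom.id _ :=
  reductionSL2_surjective_and_not_splits_general p hp5 k
end
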